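/- For 0 < q < 1, a positive integer r, and real numbers (α_1, ..., α_r) with α_1 + ... + α_j > 0 for all j = 1, ..., r, the family (q^{k_1 α_1 + ... + k_r α_r} / ([k_1]^{α_1} ... [k_r]^{α_r})) indexed over integer tuples k_1 > k_2 > ... > k_r ≥ 1 is summable. -/

import Mathlib

/-!
Since `1 ≤ [k] ≤ (1 - q)⁻¹`, each summand is at most `C q^(∑ kᵢ αᵢ)`. For small `ε > 0` the
partial sums of `α - ε` stay positive, so Abel summation against the decreasing tuple `k` gives
`∑ kᵢ αᵢ ≥ ε ∑ kᵢ`. The family is therefore dominated by `C ∏ (q^ε)^kᵢ`, a product of geometric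
series summable over all of `ℕ^r`.
-/

/-- The q-analogue `[k]_q = (1 - q^k)/(1 - q)`. -/
noncomputable def qNum (q : ℝ) (k : ℕ) : ℝ := (1 - q ^ k) / (1 - q)

open Finset Filter Topology

theorem summable_pi_prod_of_nonneg {ι κ : Type*} [Fintype ι] {f : ι → κ → ℝ}
    (hf0 : ∀ i n, 0 ≤ f i n) (hf : ∀ i, Summable (f i)) :
    Summable fun m : ι → κ => ∏ i, f i (m i) := by
  classical
  refine summable_of_sum_le (c := ∏ i, ∑' n, f i n)
    (fun m => prod_nonneg fun i _ => hf0 i (m i)) fun s => ?_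
  calc ∑ m ∈ s, ∏ i, f i (m i)
      ≤ ∑ m ∈ Fintype.piFinset fun i => s.image (· i), ∏ i, f i (m i) :=
        sum_le_sum_of_subset_of_nonneg
          (fun m hm => Fintype.mem_piFinset.2 fun i => mem_image_of_mem _ hm)
          fun m _ _ => prod_nonneg fun i _ => hf0 i (m i)
    _ = ∏ i, ∑ n ∈ s.image (· i), f i n := (prod_univ_sum _ _).symm
    _ ≤ ∏ i, ∑' n, f i n :=
        Finset.prod_le_prod (fun i _ => sum_nonneg fun n _ => hf0 i n)
          fun i _ => Summable.sum_le_tsum _ (fun n _ => hf0 i n) (hf i)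

theorem Fin.sum_mul_nonneg_of_antitone {R : Type*} [CommRing R] [PartialOrder R]
    [IsOrderedRing R] {n : ℕ} {k β : Fin n → R} (hk : Antitone k) (hk0 : ∀ i, 0 ≤ k i)
    (hβ : ∀ j, 0 ≤ ∑ i ∈ univ.filter (· ≤ j), β i) :
    0 ≤ ∑ i, k i * β i := by
  induction n with
  | zero => simp
  | succ n ih =>
    -- One step of Abel summation: `k - k (last n)` is again antitone and nonnegative.
    have hsplit : ∑ i, k i * β i =
        ∑ i : Fin n, (k i.castSucc - k (last n)) * β i.castSucc + k (last n) * ∑ i, β i := by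
      rw [mul_sum, Fin.sum_univ_castSucc (fun i => k i * β i),
        Fin.sum_univ_castSucc (fun i => k (last n) * β i)]
      simp only [sub_mul, sum_sub_distrib]
      ring
    have hprefix : ∀ j : Fin n, ∑ i ∈ univ.filter (· ≤ j), β i.castSucc =
        ∑ i ∈ univ.filter (· ≤ j.castSucc), β i := by
      intro j
      simp only [sum_filter, Fin.sum_univ_castSucc, Fin.castSucc_le_castSucc_iff,
        not_le.2 (Fin.castSucc_lt_last j), if_false, add_zero]
    have htail := ih (k := fun i => k i.castSucc - k (last n)) (β := fun i => β i.castSucc)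
      (fun i j hij => sub_le_sub_right (hk (Fin.castSucc_le_castSucc_iff.2 hij)) _)
      (fun i => sub_nonneg.2 (hk (Fin.le_last _))) fun j => hprefix j ▸ hβ j.castSucc
    have htotal : 0 ≤ ∑ i, β i := by simpa [Fin.le_last] using hβ (last n)
    rw [hsplit]
    exact add_nonneg htail (mul_nonneg (hk0 _) htotal)

theorem Fin.mul_sum_le_sum_mul_of_antitone {R : Type*} [CommRing R] [PartialOrder R]
    [IsOrderedRing R] {n : ℕ} {k α : Fin n → R} {ε : R} (hk : Antitone k) (hk0 : ∀ i, 0 ≤ k i)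
    (hε : ∀ j, 0 ≤ ∑ i ∈ univ.filter (· ≤ j), (α i - ε)) :
    ε * ∑ i, k i ≤ ∑ i, k i * α i := by
  rw [← sub_nonneg, mul_comm, sum_mul, ← sum_sub_distrib]
  simpa only [mul_sub] using Fin.sum_mul_nonneg_of_antitone hk hk0 hε

theorem exists_pos_forall_sum_sub_pos {ι κ : Type*} [Finite κ] {s : κ → Finset ι} {α : ι → ℝ}
    (hα : ∀ j, 0 < ∑ i ∈ s j, α i) : ∃ ε > 0, ∀ j, 0 < ∑ i ∈ s j, (α i - ε) := by
  have hnhds : ∀ᶠ ε in 𝓝 (0 : ℝ), ∀ j, 0 < ∑ i ∈ s j, (α i - ε) :=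
    eventually_all.2 fun j =>
      ((by fun_prop : Continuous fun ε : ℝ => ∑ i ∈ s j, (α i - ε)).tendsto' 0 _
        (by simp)).eventually_const_lt (hα j)
  obtain ⟨ε, hε, hε0⟩ := ((hnhds.filter_mono nhdsWithin_le_nhds).and
    (self_mem_nhdsWithin : ∀ᶠ ε in 𝓝[>] (0 : ℝ), 0 < ε)).exists
  exact ⟨ε, hε0, hε⟩

theorem one_le_qNum {q : ℝ} (hq0 : 0 ≤ q) (hq1 : q < 1) {k : ℕ} (hk : 1 ≤ k) :
    1 ≤ qNum q k := by
  rw [qNum, le_div_iff₀ (sub_pos.2 hq1), one_mul]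
  linarith [pow_le_pow_of_le_one hq0 hq1.le hk, pow_one q]

theorem qNum_le_inv_one_sub {q : ℝ} (hq0 : 0 ≤ q) (hq1 : q < 1) (k : ℕ) :
    qNum q k ≤ (1 - q)⁻¹ := by
  rw [qNum, div_eq_mul_inv]
  exact mul_le_of_le_one_left (inv_nonneg.2 (sub_pos.2 hq1).le)
    (sub_le_self _ (pow_nonneg hq0 k))

theorem Real.inv_rpow_le_rpow_abs {x b : ℝ} (hx : 1 ≤ x) (hxb : x ≤ b) (a : ℝ) :
    (x ^ a)⁻¹ ≤ b ^ |a| := by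
  rw [← Real.rpow_neg (zero_le_one.trans hx)]
  calc x ^ (-a) ≤ x ^ |a| := Real.rpow_le_rpow_of_exponent_le hx (neg_le_abs a)
    _ ≤ b ^ |a| := Real.rpow_le_rpow (zero_le_one.trans hx) hxb (abs_nonneg a)

theorem prod_rpow_div_qNum_rpow_le {ι : Type*} [Fintype ι] {q : ℝ} (hq0 : 0 < q) (hq1 : q < 1)
    (α : ι → ℝ) {k : ι → ℕ} (hk : ∀ i, 1 ≤ k i) :
    ∏ i, q ^ ((k i : ℝ) * α i) / qNum q (k i) ^ α i ≤
      (∏ i, (1 - q)⁻¹ ^ |α i|) * q ^ ∑ i, (k i : ℝ) * α i := by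
  have h1 i : 1 ≤ qNum q (k i) := one_le_qNum hq0.le hq1 (hk i)
  rw [Real.rpow_sum_of_pos hq0, ← prod_mul_distrib]
  refine Finset.prod_le_prod (fun i _ => by have := h1 i; positivity) fun i _ => ?_
  rw [div_eq_mul_inv, mul_comm]
  exact mul_le_mul_of_nonneg_right
    (Real.inv_rpow_le_rpow_abs (h1 i) (qNum_le_inv_one_sub hq0.le hq1 _) _) (by positivity)

theorem qmzv_real_summable_general (q : ℝ) (hq0 : 0 < q) (hq1 : q < 1)
    (r : ℕ) (α : Fin r → ℝ)
    (hα : ∀ j : Fin r, 0 < ∑ i ∈ Finset.univ.filter (· ≤ j), α i) :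
    Summable (fun k : {k : Fin r → ℕ // (∀ i j : Fin r, i < j → k j < k i) ∧ ∀ i, 1 ≤ k i} =>
      ∏ i : Fin r, (q ^ ((k.1 i : ℝ) * α i)) / (qNum q (k.1 i)) ^ (α i)) := by
  obtain ⟨ε, hε0, hε⟩ := exists_pos_forall_sum_sub_pos hα
  set C := ∏ i, (1 - q)⁻¹ ^ |α i|
  have hmajorant : Summable fun m : Fin r → ℕ => C * ∏ i, (q ^ ε) ^ m i :=
    (summable_pi_prod_of_nonneg (fun _ _ => by positivity) fun _ =>
      summable_geometric_of_lt_one (by positivity) (Real.rpow_lt_one hq0.le hq1 hε0)).mul_left C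
  refine Summable.of_nonneg_of_le (fun k => ?_) (fun ⟨k, hk, hk1⟩ => ?_)
    (hmajorant.comp_injective Subtype.val_injective)
  · exact prod_nonneg fun i _ => by
      have := one_le_qNum hq0.le hq1 (k.2.2 i)
      positivity
  have hanti : Antitone fun i => (k i : ℝ) := fun i j h =>
    Nat.cast_le.2 ((show StrictAnti k from fun i j => hk i j).antitone h)
  have hexp : ε * ∑ i, (k i : ℝ) ≤ ∑ i, (k i : ℝ) * α i :=
    Fin.mul_sum_le_sum_mul_of_antitone hanti (fun i => Nat.cast_nonneg _) fun j => (hε j).le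
  calc _ ≤ C * q ^ ∑ i, (k i : ℝ) * α i := prod_rpow_div_qNum_rpow_le hq0 hq1 α hk1
    _ ≤ C * q ^ (ε * ∑ i, (k i : ℝ)) := by
      gcongr C * ?_
      exact Real.rpow_le_rpow_of_exponent_ge hq0 hq1.le hexp
    _ = C * ∏ i, (q ^ ε) ^ k i := by
      rw [Real.rpow_mul hq0.le, ← Nat.cast_sum, Real.rpow_natCast, prod_pow_eq_pow_sum]

theorem qmzv_real_summable (q : ℝ) (hq0 : 0 < q) (hq1 : q < 1)
    (r : ℕ) (hr : 1 ≤ r) (α : Fin r → ℝ)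
    (hα : ∀ j : Fin r, 0 < ∑ i ∈ Finset.univ.filter (· ≤ j), α i) :
    Summable (fun k : {k : Fin r → ℕ // (∀ i j : Fin r, i < j → k j < k i) ∧ ∀ i, 1 ≤ k i} =>
      ∏ i : Fin r, (q ^ ((k.1 i : ℝ) * α i)) / (qNum q (k.1 i)) ^ (α i)) :=
  qmzv_real_summable_general q hq0 hq1 r α hα
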